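/- arXiv:2101.06546 — 2 statements merged into one kernel-verified Lean document; each statement's English description precedes it below -/
import Mathlib

section
/- Let T be a tree in the family F (built from P_4 by operations O1 and O2). Then the function f assigning 2 to every vertex of LV(T) and 0 to every other vertex is a restrained Italian dominating function of T of minimum weight; hence γ_{rI}(T) = 2|LV(T)| = 2γ_r(T). -/
open SimpleGraph Finset

/-- D is a restrained dominating set of the graph G restricted to vertex set vs. -/
def IsRDSOn (G : SimpleGraph ℕ) (vs D : Finset ℕ) : Prop :=
  D ⊆ vs ∧ ∀ v ∈ vs, v ∉ D → (∃ u ∈ D, G.Adj v u) ∧ ∃ u ∈ vs, u ∉ D ∧ G.Adj v u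

/-- The restrained domination number of G on vertex set vs. -/
noncomputable def rdnOn (G : SimpleGraph ℕ) (vs : Finset ℕ) : ℕ :=
  sInf {n | ∃ D : Finset ℕ, IsRDSOn G vs D ∧ D.card = n}

open Classical in
/-- f is a restrained Italian dominating function of G on vertex set vs. -/
def IsRIDFOn (G : SimpleGraph ℕ) (vs : Finset ℕ) (f : ℕ → ℕ) : Prop :=
  (∀ v ∈ vs, f v ≤ 2) ∧
  (∀ v ∈ vs, f v = 0 → 2 ≤ ∑ u ∈ vs.filter (fun u => G.Adj v u), f u) ∧
  (∀ v ∈ vs, f v = 0 → ∃ u ∈ vs, G.Adj v u ∧ f u = 0)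

/-- The restrained Italian domination number of G on vertex set vs. -/
noncomputable def ridnOn (G : SimpleGraph ℕ) (vs : Finset ℕ) : ℕ :=
  sInf {n | ∃ f : ℕ → ℕ, IsRIDFOn G vs f ∧ ∑ v ∈ vs, f v = n}

/-- The family 𝓕 of trees built from P₄ by operations O1 (attach an end-vertex of a new
P₃ to a vertex of LV) and O2 (attach the center of a new healthy spider S_{t,t} to a
vertex of LV).  `InF G vs lv` means: the graph G with vertex set vs is in the family,
with lv the set LV of vertices that were leaves at some stage of the construction. -/
inductive InF : SimpleGraph ℕ → Finset ℕ → Finset ℕ → Prop where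
  | base (a b c d : ℕ) (hab : a ≠ b) (hac : a ≠ c) (had : a ≠ d) (hbc : b ≠ c)
      (hbd : b ≠ d) (hcd : c ≠ d) :
      InF (SimpleGraph.fromEdgeSet {s(a, b), s(b, c), s(c, d)}) {a, b, c, d} {a, d}
  | o1 (G : SimpleGraph ℕ) (vs lv : Finset ℕ) (x u v w : ℕ) (hG : InF G vs lv)
      (hx : x ∈ lv) (hu : u ∉ vs) (hv : v ∉ vs) (hw : w ∉ vs)
      (huv : u ≠ v) (huw : u ≠ w) (hvw : v ≠ w) :
      InF (G ⊔ SimpleGraph.fromEdgeSet {s(x, u), s(u, v), s(v, w)})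
        (vs ∪ {u, v, w}) (lv ∪ {w})
  | o2 (G : SimpleGraph ℕ) (vs lv : Finset ℕ) (x : ℕ) (t : ℕ) (u : ℕ)
      (mid lf : Fin t → ℕ) (ht : 1 ≤ t) (hG : InF G vs lv) (hx : x ∈ lv)
      (hu : u ∉ vs) (hmid : ∀ i, mid i ∉ vs) (hlf : ∀ i, lf i ∉ vs)
      (hinj : Function.Injective
        (fun p : Fin t ⊕ Fin t ⊕ Unit => Sum.elim mid (Sum.elim lf fun _ => u) p)) :
      InF (G ⊔ SimpleGraph.fromEdgeSet
          (({s(x, u)} : Set (Sym2 ℕ)) ∪ ⋃ i : Fin t, {s(u, mid i), s(mid i, lf i)}))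
        (vs ∪ ({u} ∪ Finset.image mid Finset.univ ∪ Finset.image lf Finset.univ))
        (lv ∪ Finset.image lf Finset.univ)

/-!
Every vertex `w` of LV enters the tree as a leaf whose neighbour `y` has exactly two
neighbours, and `y` never gains a neighbour later (attachments only happen at vertices of LV).
While `w` is still a leaf, the conditions at `w` and `y` force `f w + f y ≥ 2`. To survive
later attachments at `w`, the induction on the construction is run for functions that are
exempt, at vertices of LV, from both conditions (at a cost of 2 each) or from the restraint
condition alone. Attaching a spider with centre `u` at `x` disturbs the conditions of the old
tree only at `x`, and they are repaired inside this relaxation at a cost of at most `f u`.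

For the upper bound, LV is a restrained dominating set, and twice the indicator of any
restrained dominating set is a restrained Italian dominating function; this also gives
`γ_r = |LV|`.
-/

section Relaxed

variable {V : Type*} {G : SimpleGraph V} {vs A B : Finset V} {f g : V → ℕ} {x v : V}

/-- Decidability is classical, as in `IsRIDFOn`, so that sums over `nbhdOn` are its sums. -/
noncomputable def nbhdOn (G : SimpleGraph V) (vs : Finset V) (v : V) : Finset V :=
  open Classical in {p ∈ vs | G.Adj v p}

open Classical in
theorem mem_nbhdOn {p : V} : p ∈ nbhdOn G vs v ↔ p ∈ vs ∧ G.Adj v p := mem_filter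

/-- The two conditions of a restrained Italian dominating function (without the bound `f ≤ 2`),
from which the vertices of `A` are exempt altogether and those of `B` from the restraint
condition. -/
structure IsRelaxedRIDFOn (G : SimpleGraph V) (vs A B : Finset V) (f : V → ℕ) : Prop where
  two_le_sum : ∀ v ∈ vs, v ∉ A → f v = 0 → 2 ≤ ∑ p ∈ nbhdOn G vs v, f p
  exists_zero : ∀ v ∈ vs, v ∉ A → v ∉ B → f v = 0 → ∃ p ∈ nbhdOn G vs v, f p = 0

theorem IsRelaxedRIDFOn.mono (hf : IsRelaxedRIDFOn G vs A B f) (hfg : ∀ v, f v ≤ g v)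
    (hzero : ∀ v, g v = 0 ↔ f v = 0) : IsRelaxedRIDFOn G vs A B g where
  two_le_sum v hv hvA hv0 :=
    (hf.two_le_sum v hv hvA ((hzero v).1 hv0)).trans (sum_le_sum fun p _ => hfg p)
  exists_zero v hv hvA hvB hv0 := by
    obtain ⟨p, hp, hp0⟩ := hf.exists_zero v hv hvA hvB ((hzero v).1 hv0)
    exact ⟨p, hp, (hzero p).2 hp0⟩

theorem exists_mem_eq_one_of_sum_eq_one {s : Finset V} (h : ∑ p ∈ s, f p = 1) :
    ∃ p ∈ s, f p = 1 := by
  obtain ⟨p, hp, hp0⟩ := exists_ne_zero_of_sum_ne_zero (h ▸ one_ne_zero)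
  have := single_le_sum (fun q _ => Nat.zero_le (f q)) hp
  exact ⟨p, hp, by omega⟩

def RelaxedWeightBound (G : SimpleGraph V) (vs lv : Finset V) : Prop :=
  ∀ A B f, A ⊆ lv → B ⊆ lv → IsRelaxedRIDFOn G vs A B f →
    2 * #lv ≤ ∑ v ∈ vs, f v + 2 * #A

variable [DecidableEq V]

theorem IsRelaxedRIDFOn.two_le_add_of_pendant (hf : IsRelaxedRIDFOn G vs A B f)
    {y z : V} (hxz : x ≠ z) (hxA : x ∉ A) (hyA : y ∉ A) (hyB : y ∉ B)
    (hNx : nbhdOn G vs x = {y}) (hNy : nbhdOn G vs y = {x, z}) :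
    2 ≤ f x + f y := by
  have hx : x ∈ vs := (mem_nbhdOn.1 (hNy ▸ mem_insert_self x {z})).1
  have hy : y ∈ vs := (mem_nbhdOn.1 (hNx ▸ mem_singleton_self y)).1
  by_cases hx0 : f x = 0
  · simpa [hNx, hx0] using hf.two_le_sum x hx hxA hx0
  by_cases hy0 : f y = 0
  · have hsum := hf.two_le_sum y hy hyA hy0
    obtain ⟨p, hp, hp0⟩ := hf.exists_zero y hy hyA hyB hy0
    rw [hNy, sum_pair hxz] at hsum
    rw [hNy, mem_insert, mem_singleton] at hp
    rcases hp with rfl | rfl <;> omega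
  omega

theorem IsRelaxedRIDFOn.of_insert (hf : IsRelaxedRIDFOn G vs (insert x A) B f)
    (hx : x ∉ A → f x = 0 → 2 ≤ ∑ p ∈ nbhdOn G vs x, f p) :
    IsRelaxedRIDFOn G vs A (insert x B) f where
  two_le_sum v hv hvA hv0 := by
    by_cases hvx : v = x
    · subst hvx; exact hx hvA hv0
    · exact hf.two_le_sum v hv (by simp [hvx, hvA]) hv0
  exists_zero v hv hvA hvB hv0 := by
    simp only [mem_insert, not_or] at hvB
    exact hf.exists_zero v hv (by simp [hvB.1, hvA]) hvB.2 hv0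

/-- The three repairs at `x`: it is exempted from the restraint condition; or, if its
neighbours carry no weight, from both conditions at cost 2; or, if they carry weight 1,
a neighbour of weight 1 is raised to 2. -/
theorem RelaxedWeightBound.le_add_of_defect {lv : Finset V} {k : ℕ}
    (hW : RelaxedWeightBound G vs lv) (hx : x ∈ lv) (hA : A ⊆ lv) (hB : B ⊆ lv)
    (hf : IsRelaxedRIDFOn G vs (insert x A) B f)
    (hxk : x ∉ A → f x = 0 → 2 ≤ ∑ p ∈ nbhdOn G vs x, f p + k) :
    2 * #lv ≤ ∑ v ∈ vs, f v + 2 * #A + k := by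
  have hxB : insert x B ⊆ lv := insert_subset hx hB
  by_cases hgood : x ∉ A → f x = 0 → 2 ≤ ∑ p ∈ nbhdOn G vs x, f p
  · have := hW A (insert x B) f hA hxB (hf.of_insert hgood)
    omega
  push Not at hgood
  obtain ⟨hxA, hx0, hlt⟩ := hgood
  have hk := hxk hxA hx0
  obtain hs | hs : ∑ p ∈ nbhdOn G vs x, f p = 0 ∨ ∑ p ∈ nbhdOn G vs x, f p = 1 := by omega
  · have := hW (insert x A) B f (insert_subset hx hA) hB hf
    rw [card_insert_of_notMem hxA] at this
    omega
  obtain ⟨z, hz, hz1⟩ := exists_mem_eq_one_of_sum_eq_one hs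
  set g := Function.update f z 2
  have hg : IsRelaxedRIDFOn G vs (insert x A) B g := by
    refine hf.mono (fun v => ?_) (fun v => ?_) <;>
      by_cases hv : v = z <;> simp [g, hv, hz1]
  have hgx : x ∉ A → g x = 0 → 2 ≤ ∑ p ∈ nbhdOn G vs x, g p := fun _ _ =>
    (Function.update_self z 2 f).symm.le.trans (single_le_sum (fun q _ => Nat.zero_le (g q)) hz)
  have hzvs : z ∈ vs := (mem_nbhdOn.1 hz).1
  have hsum : ∑ v ∈ vs, g v = ∑ v ∈ vs, f v + 1 := by
    rw [sum_update_of_mem hzvs, ← add_sum_erase vs f hzvs, hz1, sdiff_singleton_eq_erase]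
    ring
  have := hW A (insert x B) g hA hxB (hg.of_insert hgx)
  omega

end Relaxed

section Spider

variable {V : Type*} [DecidableEq V] {G : SimpleGraph V} {vs lv : Finset V} {x u : V} {t : ℕ}
  {mid lf : Fin t → V}

/-- `G` with the spider `S_{t,t}` of centre `u`, legs `u - mid i - lf i`, joined to `x`. -/
def SimpleGraph.attachSpider (G : SimpleGraph V) (x u : V) (mid lf : Fin t → V) : SimpleGraph V :=
  G ⊔ fromEdgeSet ({s(x, u)} ∪ ⋃ i, {s(u, mid i), s(mid i, lf i)})

def spiderVerts (u : V) (mid lf : Fin t → V) : Finset V :=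
  {u} ∪ image mid univ ∪ image lf univ

structure IsFreshSpider (vs : Finset V) (x u : V) (mid lf : Fin t → V) : Prop where
  x_mem : x ∈ vs
  u_notMem : u ∉ vs
  mid_notMem : ∀ i, mid i ∉ vs
  lf_notMem : ∀ i, lf i ∉ vs
  mid_injective : Function.Injective mid
  lf_injective : Function.Injective lf
  mid_ne_lf : ∀ i j, mid i ≠ lf j
  mid_ne_u : ∀ i, mid i ≠ u
  lf_ne_u : ∀ i, lf i ≠ u

omit [DecidableEq V] in
theorem SimpleGraph.attachSpider_adj {p q : V} : (G.attachSpider x u mid lf).Adj p q ↔ G.Adj p q ∨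
    p ≠ q ∧ ((p = x ∧ q = u ∨ p = u ∧ q = x) ∨ ∃ i, (p = u ∧ q = mid i ∨ p = mid i ∧ q = u) ∨
      (p = mid i ∧ q = lf i ∨ p = lf i ∧ q = mid i)) := by
  simp [SimpleGraph.attachSpider, and_comm]

theorem mem_spiderVerts {p : V} :
    p ∈ spiderVerts u mid lf ↔ p = u ∨ (∃ i, mid i = p) ∨ ∃ i, lf i = p := by
  simp [spiderVerts]

variable (hS : IsFreshSpider vs x u mid lf)
include hS

theorem support_attachSpider_subset (hG : G.support ⊆ vs) :
    (G.attachSpider x u mid lf).support ⊆ ↑(vs ∪ spiderVerts u mid lf) := by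
  intro p hp
  obtain ⟨q, hpq⟩ := (mem_support _).1 hp
  have : G.Adj p q → p ∈ vs := fun h => hG ⟨q, h⟩
  rw [attachSpider_adj] at hpq
  rw [mem_coe, mem_union, mem_spiderVerts]
  grind [hS.x_mem]

theorem nbhdOn_attachSpider_of_ne (hG : G.support ⊆ vs) {z : V} (hz : z ∈ vs) (hzx : z ≠ x) :
    nbhdOn (G.attachSpider x u mid lf) (vs ∪ spiderVerts u mid lf) z = nbhdOn G vs z := by
  obtain ⟨-, hu, hmid, hlf, -⟩ := hS
  ext p
  have : G.Adj z p → p ∈ vs := fun h => hG ⟨z, h.symm⟩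
  simp only [mem_nbhdOn, attachSpider_adj, mem_union, mem_spiderVerts]
  grind

theorem nbhdOn_attachSpider_self (hG : G.support ⊆ vs) :
    nbhdOn (G.attachSpider x u mid lf) (vs ∪ spiderVerts u mid lf) x =
      insert u (nbhdOn G vs x) := by
  obtain ⟨hx, hu, hmid, hlf, -⟩ := hS
  ext p
  have : G.Adj x p → p ∈ vs := fun h => hG ⟨x, h.symm⟩
  simp only [mem_nbhdOn, attachSpider_adj, mem_union, mem_spiderVerts, mem_insert]
  grind

theorem nbhdOn_attachSpider_lf (hG : G.support ⊆ vs) (i : Fin t) :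
    nbhdOn (G.attachSpider x u mid lf) (vs ∪ spiderVerts u mid lf) (lf i) = {mid i} := by
  obtain ⟨hx, hu, hmid, hlf, -, hlfi, hml, -, hlu⟩ := hS
  ext p
  have : G.Adj (lf i) p → lf i ∈ vs := fun h => hG ⟨p, h⟩
  have : ∀ a b, lf a = lf b → a = b := fun _ _ h => hlfi h
  simp only [mem_nbhdOn, attachSpider_adj, mem_union, mem_spiderVerts, mem_singleton]
  grind

theorem nbhdOn_attachSpider_mid (hG : G.support ⊆ vs) (i : Fin t) :
    nbhdOn (G.attachSpider x u mid lf) (vs ∪ spiderVerts u mid lf) (mid i) = {lf i, u} := by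
  obtain ⟨hx, hu, hmid, hlf, hmidi, -, hml, hmu, hlu⟩ := hS
  ext p
  have : G.Adj (mid i) p → mid i ∈ vs := fun h => hG ⟨p, h⟩
  have : ∀ a b, mid a = mid b → a = b := fun _ _ h => hmidi h
  simp only [mem_nbhdOn, attachSpider_adj, mem_union, mem_spiderVerts, mem_insert,
    mem_singleton]
  grind

theorem sum_union_spiderVerts (f : V → ℕ) :
    ∑ v ∈ vs ∪ spiderVerts u mid lf, f v =
      ∑ v ∈ vs, f v + (f u + ∑ i, f (mid i) + ∑ i, f (lf i)) := by
  obtain ⟨-, hu, hmid, hlf, hmidi, hlfi, hml, hmu, hlu⟩ := hS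
  rw [sum_union, spiderVerts, sum_union, sum_union, sum_singleton, sum_image hmidi.injOn,
    sum_image hlfi.injOn]
  all_goals simp only [Finset.disjoint_left, mem_union, mem_singleton, mem_image, mem_univ,
    true_and, mem_spiderVerts]
  all_goals grind

theorem card_union_image_lf (hlv : lv ⊆ vs) : #(lv ∪ image lf univ) = #lv + t := by
  rw [card_union_of_disjoint, card_image_of_injective _ hS.lf_injective, card_univ,
    Fintype.card_fin]
  simp only [Finset.disjoint_right, mem_image, mem_univ, true_and]
  rintro _ ⟨i, rfl⟩ h
  exact hS.lf_notMem i (hlv h)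

theorem inter_subset_of_subset_union_image_lf {C : Finset V} (hC : C ⊆ lv ∪ image lf univ) :
    C ∩ vs ⊆ lv := by
  intro v hv
  obtain ⟨hvC, hvs⟩ := mem_inter.1 hv
  obtain hv | ⟨i, -, rfl⟩ := mem_union.1 (hC hvC) |>.imp_right mem_image.1
  · exact hv
  · exact absurd hvs (hS.lf_notMem i)

variable {A B : Finset V} {f : V → ℕ} (hG : G.support ⊆ vs)
  (hf : IsRelaxedRIDFOn (G.attachSpider x u mid lf) (vs ∪ spiderVerts u mid lf) A B f)
include hG hf

theorem IsRelaxedRIDFOn.of_attachSpider :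
    IsRelaxedRIDFOn G vs (insert x (A ∩ vs)) (B ∩ vs) f := by
  refine ⟨fun v hv hvA hv0 => ?_, fun v hv hvA hvB hv0 => ?_⟩
  all_goals
    simp only [mem_insert, mem_inter, not_or, not_and] at hvA
    rw [← nbhdOn_attachSpider_of_ne hS hG hv hvA.1]
  · exact hf.two_le_sum v (mem_union_left _ hv) (fun h => hvA.2 h hv) hv0
  · exact hf.exists_zero v (mem_union_left _ hv) (fun h => hvA.2 h hv)
      (fun h => hvB (mem_inter.2 ⟨h, hv⟩)) hv0

theorem IsRelaxedRIDFOn.two_le_sum_add_of_attachSpider (hxA : x ∉ A ∩ vs) (hx0 : f x = 0) :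
    2 ≤ ∑ p ∈ nbhdOn G vs x, f p + f u := by
  have := hf.two_le_sum x (mem_union_left _ hS.x_mem)
    (fun h => hxA (mem_inter.2 ⟨h, hS.x_mem⟩)) hx0
  rwa [nbhdOn_attachSpider_self hS hG, sum_insert fun h => hS.u_notMem (mem_nbhdOn.1 h).1,
    add_comm] at this

theorem IsRelaxedRIDFOn.two_le_mid_add_lf (hlv : lv ⊆ vs) (hA : A ⊆ lv ∪ image lf univ)
    (hB : B ⊆ lv ∪ image lf univ) (i : Fin t) (hi : lf i ∉ A) :
    2 ≤ f (mid i) + f (lf i) := by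
  have hmid (C : Finset V) (hC : C ⊆ lv ∪ image lf univ) : mid i ∉ C := fun h => by
    obtain h | ⟨j, -, h⟩ := mem_union.1 (hC h) |>.imp_right mem_image.1
    · exact hS.mid_notMem i (hlv h)
    · exact hS.mid_ne_lf i j h.symm
  have := hf.two_le_add_of_pendant (hS.lf_ne_u i) hi (hmid A hA) (hmid B hB)
    (nbhdOn_attachSpider_lf hS hG i) (nbhdOn_attachSpider_mid hS hG i)
  omega

omit hf in
theorem RelaxedWeightBound.attachSpider (hW : RelaxedWeightBound G vs lv) (hlv : lv ⊆ vs)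
    (hx : x ∈ lv) :
    RelaxedWeightBound (G.attachSpider x u mid lf) (vs ∪ spiderVerts u mid lf)
      (lv ∪ image lf univ) := by
  intro A B f hA hB hf
  have hold : 2 * #lv ≤ ∑ v ∈ vs, f v + 2 * #(A ∩ vs) + f u :=
    hW.le_add_of_defect hx (inter_subset_of_subset_union_image_lf hS hA)
      (inter_subset_of_subset_union_image_lf hS hB) (hf.of_attachSpider hS hG)
      (hf.two_le_sum_add_of_attachSpider hS hG)
  have hlegs := sum_le_sum fun i (_ : i ∈ univ) =>
    show 2 ≤ f (mid i) + f (lf i) + if lf i ∈ A then 2 else 0 by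
      split_ifs with hi
      · omega
      · exact (hf.two_le_mid_add_lf hS hG hlv hA hB i hi).trans (Nat.le_add_right _ _)
  simp only [sum_const, card_univ, Fintype.card_fin, smul_eq_mul, sum_add_distrib,
    ← sum_filter] at hlegs
  have hcard : #(A ∩ vs) + #{i | lf i ∈ A} ≤ #A := by
    rw [← card_inter_add_card_sdiff A vs, ← card_image_of_injective _ hS.lf_injective]
    gcongr
    intro v
    simp only [mem_image, mem_filter, mem_univ, true_and, mem_sdiff]
    rintro ⟨i, hi, rfl⟩
    exact ⟨hi, hS.lf_notMem i⟩
  rw [sum_union_spiderVerts hS, card_union_image_lf hS hlv]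
  omega

end Spider

section Path

variable {V : Type*} [DecidableEq V] {a b c d : V}

def path4 (a b c d : V) : SimpleGraph V :=
  fromEdgeSet {s(a, b), s(b, c), s(c, d)}

omit [DecidableEq V] in
theorem path4_adj {p q : V} : (path4 a b c d).Adj p q ↔
    p ≠ q ∧ (p = a ∧ q = b ∨ p = b ∧ q = a ∨ p = b ∧ q = c ∨ p = c ∧ q = b ∨
      p = c ∧ q = d ∨ p = d ∧ q = c) := by
  simp only [path4, fromEdgeSet_adj, Set.mem_insert_iff, Set.mem_singleton_iff, Sym2.eq_iff]
  tauto

omit [DecidableEq V] in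
theorem path4_reverse : path4 d c b a = path4 a b c d := by
  ext p q
  simp only [path4_adj]
  tauto

theorem IsRelaxedRIDFOn.path4_end {A B : Finset V} {f : V → ℕ}
    (hf : IsRelaxedRIDFOn (path4 a b c d) {a, b, c, d} A B f) (hab : a ≠ b) (hac : a ≠ c)
    (had : a ≠ d) (hbc : b ≠ c) (hbd : b ≠ d) (hA : A ⊆ {a, d}) (hB : B ⊆ {a, d}) :
    a ∈ A ∨ 2 ≤ f a + f b := by
  have hb (C : Finset V) (hC : C ⊆ {a, d}) : b ∉ C := fun h => by
    simpa [hab.symm, hbd] using hC h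
  refine or_iff_not_imp_left.2 fun ha => hf.two_le_add_of_pendant hac ha (hb A hA) (hb B hB)
    ?_ ?_
  all_goals
    ext p
    simp only [mem_nbhdOn, path4_adj, mem_insert, mem_singleton]
    grind

theorem relaxedWeightBound_path4 (hab : a ≠ b) (hac : a ≠ c) (had : a ≠ d) (hbc : b ≠ c)
    (hbd : b ≠ d) (hcd : c ≠ d) : RelaxedWeightBound (path4 a b c d) {a, b, c, d} {a, d} := by
  intro A B f hA hB hf
  have hab' := hf.path4_end hab hac had hbc hbd hA hB
  have hdc : d ∈ A ∨ 2 ≤ f d + f c := by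
    rw [← path4_reverse, show ({a, b, c, d} : Finset V) = {d, c, b, a} by ext; simp; tauto]
      at hf
    exact hf.path4_end hcd.symm hbd.symm had.symm hbc.symm hac.symm (pair_comm a d ▸ hA)
      (pair_comm a d ▸ hB)
  have hsum : ∑ v ∈ {a, b, c, d}, f v = f a + f b + f c + f d := by
    rw [sum_insert (by simp [hab, hac, had]), sum_insert (by simp [hbc, hbd]), sum_pair hcd]
    ring
  have hA2 : a ∈ A → d ∈ A → 2 ≤ #A := fun ha hd =>
    card_pair had ▸ card_le_card (insert_subset ha (singleton_subset_iff.2 hd))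
  have hA1 : a ∈ A ∨ d ∈ A → 1 ≤ #A := fun h => card_pos.2 (by grind)
  rw [hsum, card_pair had]
  grind

end Path

section RestrainedDomination

variable {G : SimpleGraph ℕ} {vs lv D : Finset ℕ} {f : ℕ → ℕ}

theorem isRDSOn_path4 {a b c d : ℕ} (hab : a ≠ b) (hac : a ≠ c) (had : a ≠ d) (hbc : b ≠ c)
    (hbd : b ≠ d) (hcd : c ≠ d) : IsRDSOn (path4 a b c d) {a, b, c, d} {a, d} := by
  refine ⟨by grind [insert_subset_iff], fun v hv hvD => ?_⟩
  simp only [mem_insert, mem_singleton, not_or] at hv hvD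
  simp only [path4_adj, mem_insert, mem_singleton, exists_eq_or_imp, exists_eq_left]
  grind

theorem IsRDSOn.attachSpider {x u t : ℕ} {mid lf : Fin t → ℕ} (hD : IsRDSOn G vs lv)
    (hS : IsFreshSpider vs x u mid lf) (hx : x ∈ lv) (ht : 0 < t) :
    IsRDSOn (G.attachSpider x u mid lf) (vs ∪ spiderVerts u mid lf) (lv ∪ image lf univ) := by
  obtain ⟨hsub, hdom⟩ := hD
  obtain ⟨hxvs, hu, hmid, hlf, -, -, hml, hmu, hlu⟩ := hS
  refine ⟨union_subset_union hsub fun v => by grind [mem_spiderVerts], fun v hv hvD => ?_⟩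
  simp only [mem_union, mem_spiderVerts, mem_image, mem_univ, true_and, not_or,
    not_exists] at hv hvD ⊢
  simp only [attachSpider_adj]
  rcases hv with hv | rfl | ⟨i, rfl⟩ | ⟨i, rfl⟩
  · obtain ⟨⟨p, hp, hvp⟩, q, hq, hqD, hvq⟩ := hdom v hv hvD.1
    exact ⟨⟨p, Or.inl hp, Or.inl hvp⟩, q, Or.inl hq, ⟨hqD, fun i h => hlf i (h ▸ hq)⟩,
      Or.inl hvq⟩
  · refine ⟨⟨x, Or.inl hx, Or.inr ⟨fun h => hu (h ▸ hxvs), by simp⟩⟩, mid ⟨0, ht⟩, ?_⟩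
    grind
  · refine ⟨⟨lf i, Or.inr ⟨i, rfl⟩, Or.inr ⟨hml i i, ?_⟩⟩, u, ?_⟩ <;> grind
  · exact absurd rfl (hvD.2 i)

theorem IsRDSOn.isRIDFOn_indicator (hD : IsRDSOn G vs D) :
    IsRIDFOn G vs (fun v => if v ∈ D then 2 else 0) := by
  refine ⟨fun v _ => by beta_reduce; split_ifs <;> omega, fun v hv hv0 => ?_, fun v hv hv0 => ?_⟩
  · obtain ⟨⟨p, hp, hvp⟩, -⟩ := hD.2 v hv (by simpa using hv0)
    calc 2 = (if p ∈ D then 2 else 0) := (if_pos hp).symm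
      _ ≤ _ := single_le_sum (f := fun q => if q ∈ D then 2 else 0) (fun q _ => Nat.zero_le _)
        (mem_nbhdOn.2 ⟨hD.1 hp, hvp⟩)
  · obtain ⟨-, q, hq, hqD, hvq⟩ := hD.2 v hv (by simpa using hv0)
    exact ⟨q, hq, hvq, if_neg hqD⟩

theorem sum_indicator_eq (hD : D ⊆ vs) : ∑ v ∈ vs, (if v ∈ D then 2 else 0) = 2 * #D := by
  rw [sum_ite_mem, inter_eq_right.2 hD, sum_const, smul_eq_mul, mul_comm]

theorem IsRIDFOn.isRelaxedRIDFOn (hf : IsRIDFOn G vs f) : IsRelaxedRIDFOn G vs ∅ ∅ f where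
  two_le_sum v hv _ hv0 := hf.2.1 v hv hv0
  exists_zero v hv _ _ hv0 := by
    obtain ⟨p, hp, hvp, hp0⟩ := hf.2.2 v hv hv0
    exact ⟨p, mem_nbhdOn.2 ⟨hp, hvp⟩, hp0⟩

end RestrainedDomination

namespace InF

variable {G : SimpleGraph ℕ} {vs lv : Finset ℕ}

theorem lv_subset (h : InF G vs lv) : lv ⊆ vs := by
  induction h with
  | base => grind [insert_subset_iff]
  | o1 => grind [union_subset_union]
  | o2 => grind [union_subset_union]

theorem isFreshSpider {x u t : ℕ} {mid lf : Fin t → ℕ} (hx : x ∈ vs) (hu : u ∉ vs)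
    (hmid : ∀ i, mid i ∉ vs) (hlf : ∀ i, lf i ∉ vs)
    (hinj : Function.Injective
      (fun p : Fin t ⊕ Fin t ⊕ Unit => Sum.elim mid (Sum.elim lf fun _ => u) p)) :
    IsFreshSpider vs x u mid lf where
  x_mem := hx
  u_notMem := hu
  mid_notMem := hmid
  lf_notMem := hlf
  mid_injective i j h := Sum.inl_injective (@hinj (.inl i) (.inl j) h)
  lf_injective i j h :=
    Sum.inl_injective (Sum.inr_injective (@hinj (.inr (.inl i)) (.inr (.inl j)) h))
  mid_ne_lf i j h := Sum.inl_ne_inr (@hinj (.inl i) (.inr (.inl j)) h)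
  mid_ne_u i h := Sum.inl_ne_inr (@hinj (.inl i) (.inr (.inr ())) h)
  lf_ne_u i h := Sum.inl_ne_inr (Sum.inr_injective (@hinj (.inr (.inl i)) (.inr (.inr ())) h))

/-- Operation O1 is operation O2 with `t = 1`. -/
@[elab_as_elim]
theorem induction_on_spider {P : SimpleGraph ℕ → Finset ℕ → Finset ℕ → Prop} (h : InF G vs lv)
    (base : ∀ a b c d, a ≠ b → a ≠ c → a ≠ d → b ≠ c → b ≠ d → c ≠ d →
      P (path4 a b c d) {a, b, c, d} {a, d})
    (attach : ∀ G vs lv x u t (mid lf : Fin t → ℕ), InF G vs lv → P G vs lv → x ∈ lv →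
      0 < t → IsFreshSpider vs x u mid lf →
      P (G.attachSpider x u mid lf) (vs ∪ spiderVerts u mid lf) (lv ∪ image lf univ)) :
    P G vs lv := by
  induction h with
  | base a b c d hab hac had hbc hbd hcd => exact base a b c d hab hac had hbc hbd hcd
  | o1 G vs lv x u v w hG hx hu hv hw huv huw hvw ih =>
    have hS : IsFreshSpider vs x u (fun _ : Fin 1 => v) (fun _ => w) :=
      ⟨hG.lv_subset hx, hu, fun _ => hv, fun _ => hw, Function.injective_of_subsingleton _,
        Function.injective_of_subsingleton _, fun _ _ => hvw, fun _ => huv.symm,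
        fun _ => huw.symm⟩
    have hE : ({s(x, u), s(u, v), s(v, w)} : Set (Sym2 ℕ)) =
        {s(x, u)} ∪ ⋃ _ : Fin 1, {s(u, v), s(v, w)} := by
      ext e; simp
    have hV : ({u, v, w} : Finset ℕ) = spiderVerts u (fun _ : Fin 1 => v) (fun _ => w) := by
      ext; simp [spiderVerts]
    have hL : ({w} : Finset ℕ) = image (fun _ : Fin 1 => w) univ := by simp
    rw [hE, hV, hL]
    exact attach G vs lv x u 1 _ _ hG ih hx one_pos hS
  | o2 G vs lv x t u mid lf ht hG hx hu hmid hlf hinj ih =>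
    exact attach G vs lv x u t mid lf hG ih hx ht (isFreshSpider (hG.lv_subset hx) hu hmid hlf hinj)

theorem support_subset (h : InF G vs lv) : G.support ⊆ vs := by
  refine h.induction_on_spider (fun a b c d _ _ _ _ _ _ p hp => ?_)
    fun G vs lv x u t mid lf _ ih _ _ hS => support_attachSpider_subset hS ih
  obtain ⟨q, hpq⟩ := (mem_support _).1 hp
  rw [path4_adj] at hpq
  simp only [mem_coe, mem_insert, mem_singleton]
  grind

theorem isRDSOn (h : InF G vs lv) : IsRDSOn G vs lv :=
  h.induction_on_spider (fun _ _ _ _ => isRDSOn_path4)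
    fun _ _ _ _ _ _ _ _ _ ih hx ht hS => ih.attachSpider hS hx ht

theorem relaxedWeightBound (h : InF G vs lv) : RelaxedWeightBound G vs lv :=
  h.induction_on_spider (fun _ _ _ _ => relaxedWeightBound_path4)
    fun _ _ _ _ _ _ _ _ hG ih hx _ hS =>
      ih.attachSpider hS hG.support_subset hG.lv_subset hx

theorem two_mul_card_le (h : InF G vs lv) {f : ℕ → ℕ} (hf : IsRIDFOn G vs f) :
    2 * #lv ≤ ∑ v ∈ vs, f v := by
  simpa using h.relaxedWeightBound ∅ ∅ f (empty_subset _) (empty_subset _) hf.isRelaxedRIDFOn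

end InF

/-- For a tree T in the family 𝓕, assigning 2 to every vertex of LV(T) and 0 elsewhere
is a minimum-weight restrained Italian dominating function; hence
γ_{rI}(T) = 2 |LV(T)| = 2 γ_r(T). -/
theorem lv_ridf_min (G : SimpleGraph ℕ) (vs lv : Finset ℕ) (h : InF G vs lv) :
    IsRIDFOn G vs (fun v => if v ∈ lv then 2 else 0) ∧
    ridnOn G vs = 2 * lv.card ∧
    ridnOn G vs = 2 * rdnOn G vs := by
  have hD := h.isRDSOn
  have hridn : ridnOn G vs = 2 * #lv := by
    refine IsLeast.csInf_eq ⟨⟨_, hD.isRIDFOn_indicator, sum_indicator_eq hD.1⟩, ?_⟩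
    rintro _ ⟨f, hf, rfl⟩
    exact h.two_mul_card_le hf
  have hrdn : rdnOn G vs = #lv := by
    refine IsLeast.csInf_eq ⟨⟨lv, hD, rfl⟩, ?_⟩
    rintro _ ⟨D, hD', rfl⟩
    have := h.two_mul_card_le hD'.isRIDFOn_indicator
    rw [sum_indicator_eq hD'.1] at this
    omega
  exact ⟨hD.isRIDFOn_indicator, hridn, by rw [hridn, hrdn]⟩
end

section
/- Let T be a tree in the family F built by operations O1 and O2. Then every vertex of V(T) ∖ LV(T) is adjacent to at least one vertex of V(T) ∖ LV(T) and to exactly one vertex of LV(T). -/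
open SimpleGraph Finset

/-! Each operation glues a gadget (a `P₃` or a healthy spider) onto a vertex `x ∈ LV` by edges
that touch only `x` and new vertices, and inside the gadget every new non-leaf vertex has a new
non-leaf neighbour and exactly one neighbour among `x` and the new leaves. Old vertices outside
`LV` gain no edges and the new leaves are new, so the adjacency property survives each step.
The base `P₄ = a b c d` is itself the `P₃` gadget `b c d` glued onto the one-vertex graph `{a}`. -/

/-- `H` is glued onto the old graph at `x`; `ws` are its new vertices and `lw` its new
leaves. -/
structure IsPendantGadget (H : SimpleGraph ℕ) (x : ℕ) (ws lw : Finset ℕ) : Prop where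
  leaves_subset : lw ⊆ ws
  adj_mem : ∀ a b, H.Adj a b → a = x ∨ a ∈ ws
  exists_inner_adj : ∀ y ∈ ws, y ∉ lw → ∃ u ∈ ws, u ∉ lw ∧ H.Adj y u
  existsUnique_leaf_adj : ∀ y ∈ ws, y ∉ lw → ∃! u, (u = x ∨ u ∈ lw) ∧ H.Adj y u

structure LVInvariant (G : SimpleGraph ℕ) (vs lv : Finset ℕ) : Prop where
  lv_subset : lv ⊆ vs
  mem_of_adj : ∀ a b, G.Adj a b → a ∈ vs
  outside_adj : ∀ v ∈ vs, v ∉ lv →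
    (∃ u ∈ vs, u ∉ lv ∧ G.Adj v u) ∧ ∃! u, u ∈ lv ∧ G.Adj v u

namespace LVInvariant

variable {G H : SimpleGraph ℕ} {vs lv ws lw : Finset ℕ} {x : ℕ}

theorem bot_singleton (a : ℕ) : LVInvariant ⊥ {a} {a} where
  lv_subset := subset_rfl
  mem_of_adj _ _ h := h.elim
  outside_adj _ hv hvlv := (hvlv hv).elim

theorem outside_adj_sup_of_mem_old (hG : LVInvariant G vs lv) (hx : x ∈ lv)
    (hws : Disjoint vs ws) (hH : IsPendantGadget H x ws lw) {y : ℕ} (hy : y ∈ vs) (hylv : y ∉ lv) :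
    (∃ u ∈ vs ∪ ws, u ∉ lv ∪ lw ∧ (G ⊔ H).Adj y u) ∧
      ∃! u, u ∈ lv ∪ lw ∧ (G ⊔ H).Adj y u := by
  have not_mem_lw : ∀ {z}, z ∈ vs → z ∉ lw := fun hz hzw =>
    disjoint_left.1 hws hz (hH.leaves_subset hzw)
  have not_adjH : ∀ z, ¬ H.Adj y z := fun z hyz => by
    rcases hH.adj_mem y z hyz with rfl | hyw
    · exact hylv hx
    · exact disjoint_left.1 hws hy hyw
  obtain ⟨⟨p, hp, hplv, hyp⟩, q, ⟨hq, hyq⟩, huniq⟩ := hG.outside_adj y hy hylv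
  refine ⟨⟨p, mem_union_left _ hp, by simp [hplv, not_mem_lw hp], Or.inl hyp⟩,
    q, ⟨mem_union_left _ hq, Or.inl hyq⟩, ?_⟩
  rintro z ⟨hz, hyz | hyz⟩
  · have hzvs := hG.mem_of_adj z y hyz.symm
    exact huniq z ⟨(mem_union.1 hz).resolve_right (not_mem_lw hzvs), hyz⟩
  · exact (not_adjH z hyz).elim

theorem outside_adj_sup_of_mem_new (hG : LVInvariant G vs lv) (hx : x ∈ lv)
    (hws : Disjoint vs ws) (hH : IsPendantGadget H x ws lw) {y : ℕ} (hy : y ∈ ws) (hylw : y ∉ lw) :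
    (∃ u ∈ vs ∪ ws, u ∉ lv ∪ lw ∧ (G ⊔ H).Adj y u) ∧
      ∃! u, u ∈ lv ∪ lw ∧ (G ⊔ H).Adj y u := by
  have not_mem_lv : ∀ {z}, z ∈ ws → z ∉ lv := fun hz hzlv =>
    disjoint_left.1 hws (hG.lv_subset hzlv) hz
  have adj_iff : ∀ z, (G ⊔ H).Adj y z ↔ H.Adj y z := fun z =>
    or_iff_right fun hyz => disjoint_left.1 hws (hG.mem_of_adj y z hyz) hy
  have leaf_iff : ∀ z, z ∈ lv ∪ lw ∧ (G ⊔ H).Adj y z ↔ (z = x ∨ z ∈ lw) ∧ H.Adj y z := by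
    intro z
    rw [adj_iff, mem_union]
    refine and_congr_left fun hyz => or_congr_left ⟨fun hz => ?_, fun hz => hz ▸ hx⟩
    exact (hH.adj_mem z y hyz.symm).resolve_right fun hzw => not_mem_lv hzw hz
  obtain ⟨u, hu, hulw, hyu⟩ := hH.exists_inner_adj y hy hylw
  refine ⟨⟨u, mem_union_right _ hu, by simp [hulw, not_mem_lv hu], (adj_iff u).2 hyu⟩, ?_⟩
  exact (existsUnique_congr leaf_iff).2 (hH.existsUnique_leaf_adj y hy hylw)

theorem sup_gadget (hG : LVInvariant G vs lv) (hx : x ∈ lv) (hws : Disjoint vs ws)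
    (hH : IsPendantGadget H x ws lw) : LVInvariant (G ⊔ H) (vs ∪ ws) (lv ∪ lw) where
  lv_subset := union_subset_union hG.lv_subset hH.leaves_subset
  mem_of_adj a b hab := by
    rcases hab with hab | hab
    · exact mem_union_left _ (hG.mem_of_adj a b hab)
    · rcases hH.adj_mem a b hab with rfl | ha
      · exact mem_union_left _ (hG.lv_subset hx)
      · exact mem_union_right _ ha
  outside_adj y hy hylv := by
    rw [mem_union, not_or] at hylv
    rcases mem_union.1 hy with hy | hy
    · exact hG.outside_adj_sup_of_mem_old hx hws hH hy hylv.1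
    · exact hG.outside_adj_sup_of_mem_new hx hws hH hy hylv.2

end LVInvariant

def pendantPath (x u v w : ℕ) : SimpleGraph ℕ := fromEdgeSet {s(x, u), s(u, v), s(v, w)}

theorem isPendantGadget_pendantPath {x u v w : ℕ} (hx : x ∉ ({u, v, w} : Finset ℕ))
    (huv : u ≠ v) (huw : u ≠ w) (hvw : v ≠ w) :
    IsPendantGadget (pendantPath x u v w) x {u, v, w} {w} := by
  simp only [mem_insert, mem_singleton, not_or] at hx
  have adj_iff : ∀ a b, (pendantPath x u v w).Adj a b ↔
      (a = x ∧ b = u ∨ a = u ∧ b = x) ∨ (a = u ∧ b = v ∨ a = v ∧ b = u) ∨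
        (a = v ∧ b = w ∨ a = w ∧ b = v) := by
    intro a b
    simp only [pendantPath, fromEdgeSet_adj, Set.mem_insert_iff, Set.mem_singleton_iff, Sym2.eq_iff]
    exact ⟨And.left, fun h => ⟨h, by omega⟩⟩
  refine ⟨by simp, fun a b hab => ?_, fun y hy hyw => ?_, fun y hy hyw => ?_⟩
  · rw [adj_iff] at hab
    simp only [mem_insert, mem_singleton]
    omega
  · simp only [mem_insert, mem_singleton] at hy hyw
    rcases hy with hy | hy | hy
    · exact ⟨v, by simp, by simpa using hvw, by rw [adj_iff]; omega⟩
    · exact ⟨u, by simp, by simpa using huw, by rw [adj_iff]; omega⟩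
    · exact (hyw hy).elim
  · simp only [mem_insert, mem_singleton] at hy hyw
    rcases hy with hy | hy | hy
    · exact ⟨x, ⟨Or.inl rfl, by rw [adj_iff]; omega⟩,
        fun z hz => by simp only [mem_singleton, adj_iff] at hz; omega⟩
    · exact ⟨w, ⟨Or.inr (mem_singleton_self w), by rw [adj_iff]; omega⟩,
        fun z hz => by simp only [mem_singleton, adj_iff] at hz; omega⟩
    · exact (hyw hy).elim

section Spider

variable {t : ℕ} (x u : ℕ) (mid lf : Fin t → ℕ)

def pendantSpider : SimpleGraph ℕ :=
  fromEdgeSet (({s(x, u)} : Set (Sym2 ℕ)) ∪ ⋃ i : Fin t, {s(u, mid i), s(mid i, lf i)})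

theorem pendantSpider_adj_iff (a b : ℕ) :
    (pendantSpider x u mid lf).Adj a b ↔ a ≠ b ∧ ((a = x ∧ b = u ∨ a = u ∧ b = x) ∨
      ∃ i, (a = u ∧ b = mid i ∨ a = mid i ∧ b = u) ∨
        (a = mid i ∧ b = lf i ∨ a = lf i ∧ b = mid i)) := by
  simp only [pendantSpider, fromEdgeSet_adj, Set.mem_union, Set.mem_singleton_iff, Set.mem_iUnion,
    Set.mem_insert_iff, Sym2.eq_iff]
  exact and_comm

variable {x u mid lf}

theorem pendantSpider_adj_center_iff (hxu : x ≠ u) (hmu : ∀ i, mid i ≠ u) (hlu : ∀ i, lf i ≠ u)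
    (z : ℕ) : (pendantSpider x u mid lf).Adj u z ↔ z = x ∨ ∃ i, z = mid i := by
  rw [pendantSpider_adj_iff]
  constructor
  · rintro ⟨-, (⟨h, -⟩ | ⟨-, rfl⟩) | ⟨i, (⟨-, rfl⟩ | ⟨h, -⟩) | (⟨h, -⟩ | ⟨h, -⟩)⟩⟩
    · exact (hxu h.symm).elim
    · exact Or.inl rfl
    · exact Or.inr ⟨i, rfl⟩
    · exact (hmu i h.symm).elim
    · exact (hmu i h.symm).elim
    · exact (hlu i h.symm).elim
  · rintro (rfl | ⟨i, rfl⟩)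
    · exact ⟨hxu.symm, Or.inl (Or.inr ⟨rfl, rfl⟩)⟩
    · exact ⟨(hmu i).symm, Or.inr ⟨i, Or.inl (Or.inl ⟨rfl, rfl⟩)⟩⟩

theorem pendantSpider_adj_mid_iff (hmid : Function.Injective mid) (hmx : ∀ i, mid i ≠ x)
    (hmu : ∀ i, mid i ≠ u) (hml : ∀ i j, mid i ≠ lf j) (i : Fin t) (z : ℕ) :
    (pendantSpider x u mid lf).Adj (mid i) z ↔ z = u ∨ z = lf i := by
  rw [pendantSpider_adj_iff]
  constructor
  · rintro ⟨-, (⟨h, -⟩ | ⟨h, -⟩) | ⟨j, (⟨h, -⟩ | ⟨-, rfl⟩) | (⟨h, rfl⟩ | ⟨h, -⟩)⟩⟩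
    · exact (hmx i h).elim
    · exact (hmu i h).elim
    · exact (hmu i h).elim
    · exact Or.inl rfl
    · exact Or.inr (by rw [hmid h])
    · exact (hml i j h).elim
  · rintro (rfl | rfl)
    · exact ⟨hmu i, Or.inr ⟨i, Or.inl (Or.inr ⟨rfl, rfl⟩)⟩⟩
    · exact ⟨hml i i, Or.inr ⟨i, Or.inr (Or.inl ⟨rfl, rfl⟩)⟩⟩

theorem isPendantGadget_pendantSpider (ht : 1 ≤ t)
    (hinj : Function.Injective
      (fun p : Fin t ⊕ Fin t ⊕ Unit => Sum.elim mid (Sum.elim lf fun _ => u) p))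
    (hx : x ∉ {u} ∪ image mid univ ∪ image lf univ) :
    IsPendantGadget (pendantSpider x u mid lf) x ({u} ∪ image mid univ ∪ image lf univ)
      (image lf univ) := by
  obtain ⟨mid_inj, lf_u_inj, mid_ne⟩ := Sum.elim_injective.1 hinj
  have hlu : ∀ i, lf i ≠ u := fun i => (Sum.elim_injective.1 lf_u_inj).2.2 i ()
  have hmu : ∀ i, mid i ≠ u := fun i => mid_ne i (.inr ())
  have hml : ∀ i j, mid i ≠ lf j := fun i j => mid_ne i (.inl j)
  simp only [mem_union, mem_singleton, mem_image, mem_univ, true_and, not_or, not_exists] at hx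
  obtain ⟨⟨hxu, hmx⟩, -⟩ := hx
  have adj_center := pendantSpider_adj_center_iff hxu hmu hlu
  have adj_mid := pendantSpider_adj_mid_iff mid_inj hmx hmu hml
  have u_not_leaf : u ∉ image lf univ := by simpa using hlu
  have mid_not_leaf : ∀ i, mid i ∉ image lf univ := fun i => by simpa [eq_comm] using hml i
  refine ⟨subset_union_right, fun a b hab => ?_, fun y hy hylw => ?_, fun y hy hylw => ?_⟩
  · rw [pendantSpider_adj_iff] at hab
    rcases hab with
      ⟨-, (⟨rfl, -⟩ | ⟨rfl, -⟩) | ⟨i, (⟨rfl, -⟩ | ⟨rfl, -⟩) | (⟨rfl, -⟩ | ⟨rfl, -⟩)⟩⟩ <;> simp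
  · simp only [mem_union, mem_singleton, mem_image, mem_univ, true_and] at hy
    rcases hy with (rfl | ⟨i, rfl⟩) | ⟨i, rfl⟩
    · exact ⟨mid ⟨0, ht⟩, by simp, mid_not_leaf _, (adj_center _).2 (Or.inr ⟨_, rfl⟩)⟩
    · exact ⟨u, by simp, u_not_leaf, (adj_mid i u).2 (Or.inl rfl)⟩
    · exact (hylw (mem_image_of_mem _ (mem_univ _))).elim
  · simp only [mem_union, mem_singleton, mem_image, mem_univ, true_and] at hy
    rcases hy with (rfl | ⟨i, rfl⟩) | ⟨i, rfl⟩
    · refine ⟨x, ⟨Or.inl rfl, (adj_center x).2 (Or.inl rfl)⟩, ?_⟩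
      rintro z ⟨hz, hyz⟩
      rcases (adj_center z).1 hyz with rfl | ⟨i, rfl⟩
      · rfl
      · exact hz.elim (fun h => (hmx i h).elim) (fun h => (mid_not_leaf i h).elim)
    · refine ⟨lf i, ⟨Or.inr (mem_image_of_mem _ (mem_univ _)), (adj_mid i _).2 (Or.inr rfl)⟩, ?_⟩
      rintro z ⟨hz, hyz⟩
      rcases (adj_mid i z).1 hyz with rfl | rfl
      · exact hz.elim (fun h => (hxu h.symm).elim) (fun h => (u_not_leaf h).elim)
      · rfl
    · exact (hylw (mem_image_of_mem _ (mem_univ _))).elim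

end Spider

theorem InF.lvInvariant {G : SimpleGraph ℕ} {vs lv : Finset ℕ} (h : InF G vs lv) :
    LVInvariant G vs lv := by
  induction h with
  | base a b c d hab hac had hbc hbd hcd =>
    have h := (LVInvariant.bot_singleton a).sup_gadget (mem_singleton_self a)
      (by simp [hab, hac, had]) (isPendantGadget_pendantPath (by simp [hab, hac, had]) hbc hbd hcd)
    rwa [bot_sup_eq, ← insert_eq, ← insert_eq] at h
  | o1 G vs lv x u v w _ hx hu hv hw huv huw hvw ih =>
    have hws : Disjoint vs {u, v, w} := by simp [hu, hv, hw]
    exact ih.sup_gadget hx hws <| isPendantGadget_pendantPath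
      (disjoint_left.1 hws (ih.lv_subset hx)) huv huw hvw
  | o2 G vs lv x t u mid lf ht _ hx hu hmid hlf hinj ih =>
    have hws : Disjoint vs ({u} ∪ image mid univ ∪ image lf univ) := by
      refine disjoint_right.2 fun y hy => ?_
      simp only [mem_union, mem_singleton, mem_image, mem_univ, true_and] at hy
      rcases hy with (rfl | ⟨i, rfl⟩) | ⟨i, rfl⟩
      exacts [hu, hmid i, hlf i]
    exact ih.sup_gadget hx hws <| isPendantGadget_pendantSpider ht hinj
      (disjoint_left.1 hws (ih.lv_subset hx))

/-- For a tree T in the family 𝓕, every vertex of V(T) ∖ LV(T) is adjacent to at least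
one vertex of V(T) ∖ LV(T) and to exactly one vertex of LV(T). -/
theorem outside_lv_adjacency (G : SimpleGraph ℕ) (vs lv : Finset ℕ) (h : InF G vs lv) :
    ∀ v ∈ vs, v ∉ lv →
      (∃ u ∈ vs, u ∉ lv ∧ G.Adj v u) ∧ ∃! u, u ∈ lv ∧ G.Adj v u :=
  h.lvInvariant.outside_adj
end
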